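/- Given a continuous ψ : X → (0,∞) and a local homeomorphism T : X → X with finite fibers, the function D_ψ(x, m−n, y) = (ψ(x)ψ(Tx)⋯ψ(T^{m−1}x)) / (ψ(y)ψ(Ty)⋯ψ(T^{n−1}y)) on the Renault–Deaconu groupoid G(X,T) is well-defined (independent of the representation k = m − n with T^m x = T^n y, provided ψ satisfies no extra condition beyond positivity when T is injective on appropriate sets) and is a multiplicative cocycle: D_ψ(γ₁γ₂) = D_ψ(γ₁)D_ψ(γ₂) for composable γ₁, γ₂, and D_ψ(γ⁻¹) = D_ψ(γ)⁻¹. -/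

import Mathlib

open Finset

/-- The value of the cocycle `D_ψ` on the representative `(m, n)` of an
element `(x, m−n, y)` of `G(X,T)`:
`(ψ(x)ψ(Tx)⋯ψ(T^{m−1}x)) / (ψ(y)ψ(Ty)⋯ψ(T^{n−1}y))`. -/
noncomputable def Dpsi {X : Type*} (T : X → X) (ψ : X → ℝ) (m n : ℕ) (x y : X) : ℝ :=
  (∏ i ∈ range m, ψ (T^[i] x)) / (∏ i ∈ range n, ψ (T^[i] y))

private lemma iter_shift {X : Type*} (T : X → X) {m n : ℕ} {x y : X}
    (h : T^[m] x = T^[n] y) (j : ℕ) : T^[m + j] x = T^[n + j] y := by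
  rw [add_comm m j, add_comm n j, Function.iterate_add_apply, Function.iterate_add_apply, h]

private lemma Dpsi_shift {X : Type*} (T : X → X) (ψ : X → ℝ) (hψ : ∀ x, 0 < ψ x)
    {m n : ℕ} {x y : X} (h : T^[m] x = T^[n] y) (t : ℕ) :
    Dpsi T ψ (m + t) (n + t) x y = Dpsi T ψ m n x y := by
  unfold Dpsi
  rw [Finset.prod_range_add, Finset.prod_range_add]
  have hQ : (∏ i ∈ range t, ψ (T^[m + i] x)) = ∏ i ∈ range t, ψ (T^[n + i] y) :=
    Finset.prod_congr rfl fun i _ => by rw [iter_shift T h i]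
  rw [hQ]
  exact mul_div_mul_right _ _ (ne_of_gt (Finset.prod_pos fun i _ => hψ _))

/-- For a continuous `ψ : X → (0,∞)` and a local homeomorphism `T : X → X`,
the function `D_ψ` on the Renault–Deaconu groupoid `G(X,T)` is well defined
(independent of the representation `k = m − n` with `T^m x = T^n y`) and is
a multiplicative cocycle: `D_ψ(γ₁γ₂) = D_ψ(γ₁)D_ψ(γ₂)` for composable
`γ₁, γ₂` and `D_ψ(γ⁻¹) = D_ψ(γ)⁻¹`. -/
theorem Dpsi_wellDefined_cocycle {X : Type*} [TopologicalSpace X]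
    (T : X → X) (hT : IsLocalHomeomorph T)
    (ψ : X → ℝ) (hψc : Continuous ψ) (hψ : ∀ x, 0 < ψ x) :
    -- well-definedness: independence of the representation `k = m − n`
    (∀ (x y : X) (m n m' n' : ℕ),
      T^[m] x = T^[n] y → T^[m'] x = T^[n'] y →
      (m : ℤ) - (n : ℤ) = (m' : ℤ) - (n' : ℤ) →
      Dpsi T ψ m n x y = Dpsi T ψ m' n' x y) ∧
    -- multiplicativity on composable pairs: the product
    -- `(x, m−n, y)(y, m'−n', z) = (x, (m+m')−(n+n'), z)`
    (∀ (x y z : X) (m n m' n' : ℕ),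
      T^[m] x = T^[n] y → T^[m'] y = T^[n'] z →
      Dpsi T ψ (m + m') (n + n') x z = Dpsi T ψ m n x y * Dpsi T ψ m' n' y z) ∧
    -- inversion: `D_ψ(γ⁻¹) = D_ψ(γ)⁻¹`
    (∀ (x y : X) (m n : ℕ), T^[m] x = T^[n] y →
      Dpsi T ψ n m y x = (Dpsi T ψ m n x y)⁻¹) := by
  have pos : ∀ (w : X) (k : ℕ), 0 < ∏ i ∈ range k, ψ (T^[i] w) :=
    fun w k => Finset.prod_pos fun i _ => hψ _
  refine ⟨?_, ?_, ?_⟩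
  · intro x y m n m' n' h1 h2 hk
    rcases le_total m m' with hm | hm
    · obtain ⟨t, rfl⟩ := Nat.exists_eq_add_of_le hm
      have hn : n' = n + t := by omega
      subst hn
      exact (Dpsi_shift T ψ hψ h1 t).symm
    · obtain ⟨t, rfl⟩ := Nat.exists_eq_add_of_le hm
      have hn : n = n' + t := by omega
      subst hn
      exact Dpsi_shift T ψ hψ h2 t
  · intro x y z m n m' n' h1 h2
    unfold Dpsi
    rw [show n + n' = n' + n from add_comm n n']
    rw [Finset.prod_range_add, Finset.prod_range_add]
    have hA : (∏ i ∈ range m', ψ (T^[m + i] x)) = ∏ i ∈ range m', ψ (T^[n + i] y) :=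
      Finset.prod_congr rfl fun i _ => by rw [iter_shift T h1 i]
    rw [hA]
    -- key identity on y-prefix of length n + m'
    have hy : (∏ i ∈ range n, ψ (T^[i] y)) * ∏ i ∈ range m', ψ (T^[n + i] y)
        = (∏ i ∈ range m', ψ (T^[i] y)) * ∏ i ∈ range n, ψ (T^[n' + i] z) := by
      have e1 : (∏ i ∈ range n, ψ (T^[i] y)) * ∏ i ∈ range m', ψ (T^[n + i] y)
          = ∏ i ∈ range (n + m'), ψ (T^[i] y) := (Finset.prod_range_add _ _ _).symm
      have e2 : (∏ i ∈ range m', ψ (T^[i] y)) * ∏ i ∈ range n, ψ (T^[m' + i] y)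
          = ∏ i ∈ range (m' + n), ψ (T^[i] y) := (Finset.prod_range_add _ _ _).symm
      have e3 : (∏ i ∈ range n, ψ (T^[m' + i] y)) = ∏ i ∈ range n, ψ (T^[n' + i] z) :=
        Finset.prod_congr rfl fun i _ => by rw [iter_shift T h2 i]
      rw [e1, add_comm n m', ← e2, e3]
    have h1 := (pos y n).ne'
    have h2 := (pos z n').ne'
    have h4 := (Finset.prod_pos (fun i (_ : i ∈ range n) => hψ (T^[n' + i] z))).ne'
    field_simp
    linear_combination (∏ i ∈ range m, ψ (T^[i] x)) * hy
  · intro x y m n h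
    unfold Dpsi
    rw [inv_div]
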